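/- arXiv:1208.5542 — 2 statements merged into one kernel-verified Lean document; each statement's English description precedes it below -/
import Mathlib

section
/- Let R be a commutative semiring, let m be a finite index type, let p be a finite index type of processors, and for each j : p let n j be a finite index type. Let A be an m × (Σ j, n j) matrix over R (a row block partitioned into column sub-blocks A_j, where A_j is the submatrix of A on columns {⟨j, k⟩ : k ∈ n j}), and let f be a (Σ j, n j)-vector with pieces f_j : n j → R given by f_j k = f ⟨j, k⟩. For each j define the directory vector V_j : n j → R by V_j k = 1 if column k of the sub-block A_j contains at least one nonzero entry, and V_j k = 0 otherwise. Then Σ_{j} A_j ⊗ (f_j ⊙ V_j) = A ⊗ f. (Paper's Lemma 2: the sieved block computation t_i = Σ_j A_{i,j} ⊗ f_{i,j} with f_{i,j} = f_j ⊙ V_{j,i} is equivalent to the unsieved computation t_i = A_i ⊗ f, establishing the correctness of the directory-based BFS algorithm.) -/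
/-! The directory vector only masks columns of a sub-block that are entirely zero, and a zero
column contributes nothing to a matrix-vector product, so sieving `f_j` by `V_j` leaves each
`A_j ⊗ f_j` unchanged. Summing the block products `A_j ⊗ f_j` over the processors `j` is
then the product `A ⊗ f` with the sum over `Σ j, n j` split along its first coordinate. -/

open Matrix

theorem Matrix.mulVec_mul_of_forall_ne_zero_eq_one {R m n : Type*} [NonAssocSemiring R]
    [Fintype n] (A : Matrix m n R) (f V : n → R) (hV : ∀ k, (∃ i, A i k ≠ 0) → V k = 1) :
    A *ᵥ (fun k => f k * V k) = A *ᵥ f := by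
  funext i
  refine Finset.sum_congr rfl fun k _ => ?_
  dsimp only
  by_cases hk : ∃ i, A i k ≠ 0
  · rw [hV k hk, mul_one]
  · rw [not_exists_not.mp hk i, zero_mul, zero_mul]

theorem Matrix.sum_mulVec_submatrix_sigmaMk {R m p : Type*} [NonUnitalNonAssocSemiring R]
    [Fintype p] {n : p → Type*} [∀ j, Fintype (n j)] (A : Matrix m ((j : p) × n j) R)
    (f : ((j : p) × n j) → R) :
    ∑ j, A.submatrix id (Sigma.mk j) *ᵥ (fun k => f ⟨j, k⟩) = A *ᵥ f := by
  funext i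
  simp only [Finset.sum_apply, mulVec, dotProduct, submatrix_apply, id]
  rw [← Finset.univ_sigma_univ, Finset.sum_sigma]

theorem sum_mulVec_sieved_blocks_general {R : Type*} [CommSemiring R]
    {m p : Type*} [Fintype p] {n : p → Type*} [∀ j, Fintype (n j)]
    (A : Matrix m ((j : p) × n j) R) (f : ((j : p) × n j) → R)
    (Asub : (j : p) → Matrix m (n j) R)
    (hAsub : ∀ j i k, Asub j i k = A i ⟨j, k⟩)
    (fsub : (j : p) → n j → R)
    (hfsub : ∀ j k, fsub j k = f ⟨j, k⟩)
    (V : (j : p) → n j → R)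
    (hV1 : ∀ j k, (∃ i, Asub j i k ≠ 0) → V j k = 1) :
    (∑ j, (Asub j).mulVec (fun k => fsub j k * V j k)) = A.mulVec f := by
  have hAsub' : Asub = fun j => A.submatrix id (Sigma.mk j) :=
    funext fun j => funext fun i => funext (hAsub j i)
  have hfsub' : fsub = fun j k => f ⟨j, k⟩ := funext fun j => funext (hfsub j)
  simp_rw [fun j => (Asub j).mulVec_mul_of_forall_ne_zero_eq_one (fsub j) (V j) (hV1 j)]
  subst hAsub' hfsub'
  exact A.sum_mulVec_submatrix_sigmaMk f

/-- Paper's Lemma 2: the sieved block computation `∑ j, A_j ⊗ (f_j ⊙ V_j)`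
equals the unsieved computation `A ⊗ f`, where `A_j` is the sub-block of the
block row `A` on the columns of processor `j`, `f_j` is the corresponding piece
of `f`, and `V_j` is the column directory vector of `A_j`. -/
theorem sum_mulVec_sieved_blocks {R : Type*} [CommSemiring R]
    {m p : Type*} [Fintype m] [Fintype p] {n : p → Type*} [∀ j, Fintype (n j)]
    (A : Matrix m ((j : p) × n j) R) (f : ((j : p) × n j) → R)
    (Asub : (j : p) → Matrix m (n j) R)
    (hAsub : ∀ j i k, Asub j i k = A i ⟨j, k⟩)
    (fsub : (j : p) → n j → R)
    (hfsub : ∀ j k, fsub j k = f ⟨j, k⟩)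
    (V : (j : p) → n j → R)
    (hV1 : ∀ j k, (∃ i, Asub j i k ≠ 0) → V j k = 1)
    (hV0 : ∀ j k, ¬ (∃ i, Asub j i k ≠ 0) → V j k = 0) :
    (∑ j, (Asub j).mulVec (fun k => fsub j k * V j k)) = A.mulVec f :=
  sum_mulVec_sieved_blocks_general A f Asub hAsub fsub hfsub V hV1
end

section
/- Let G be a simple graph on a finite vertex type and let s be a vertex. Define the BFS frontier sets F : ℕ → Set V by F 0 = {s} and F (k+1) = {v | ∃ u ∈ F k, G.Adj u v} \ (⋃ i ≤ k, F i). Then for every k, the frontier at level k is exactly the set of vertices at graph distance k from s: v ∈ F k if and only if G.Reachable s v and G.dist s v = k. (This is the correctness of the level-synchronous BFS frontier recurrence f_{L(k+1)} = Aᵀ ⊗ f_{Lk} ⊙ complement(π_k) underlying all three algorithms in the paper.) -/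
/-!
The distance levels from `s` satisfy the BFS recurrence themselves: a vertex at distance `k + 1`
is adjacent to the penultimate vertex of a shortest walk to it, which is at distance `k`, and a
neighbour of a vertex at distance `k` is at distance at most `k + 1`. Since the recurrence
determines `F` by strong induction, `F` is the sequence of distance levels.
-/

namespace SimpleGraph

variable {V : Type*} {G : SimpleGraph V} {s u v : V} {k : ℕ}

lemma dist_le_dist_add_one_of_adj (h : G.Adj u v) : G.dist s v ≤ G.dist s u + 1 :=
  dist_eq_one_iff_adj.mpr h ▸ h.reachable.dist_triangle_right s

lemma Reachable.exists_adj_dist_eq_of_dist_eq_succ (hr : G.Reachable s v)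
    (hd : G.dist s v = k + 1) : ∃ u, (G.Reachable s u ∧ G.dist s u = k) ∧ G.Adj u v := by
  obtain ⟨p, hp⟩ := hr.exists_walk_length_eq_dist
  have hnil : ¬p.Nil := by
    rw [← Walk.length_eq_zero_iff]
    omega
  have hlen : p.dropLast.length = k := by
    rw [Walk.length_dropLast]
    omega
  have hadj := p.adj_penultimate hnil
  refine ⟨p.penultimate, ⟨p.dropLast.reachable, ?_⟩, hadj⟩
  have := dist_le p.dropLast
  have := dist_le_dist_add_one_of_adj (s := s) hadj
  omega

variable (G s) in
/-- `G.dist` is `0` between mutually unreachable vertices, hence the reachability conjunct. -/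
def distLevel (k : ℕ) : Set V := {v | G.Reachable s v ∧ G.dist s v = k}

@[simp]
lemma mem_distLevel : v ∈ G.distLevel s k ↔ G.Reachable s v ∧ G.dist s v = k := .rfl

lemma distLevel_zero : G.distLevel s 0 = {s} := by
  ext v
  constructor
  · rintro ⟨hr, hd⟩
    exact (hr.dist_eq_zero_iff.mp hd).symm
  · rintro rfl
    exact ⟨.refl _, dist_self⟩

lemma distLevel_succ : G.distLevel s (k + 1) =
    {v | ∃ u ∈ G.distLevel s k, G.Adj u v} \ ⋃ i ≤ k, G.distLevel s i := by
  ext v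
  simp only [Set.mem_sdiff, Set.mem_ofPred_eq, Set.mem_iUnion, mem_distLevel, exists_prop]
  constructor
  · rintro ⟨hr, hd⟩
    exact ⟨hr.exists_adj_dist_eq_of_dist_eq_succ hd, by omega⟩
  · rintro ⟨⟨u, ⟨hru, hdu⟩, hadj⟩, hfar⟩
    have hr : G.Reachable s v := hru.trans hadj.reachable
    have := dist_le_dist_add_one_of_adj (s := s) hadj
    have : ¬G.dist s v ≤ k := fun hle ↦ hfar ⟨_, hle, hr, rfl⟩
    exact ⟨hr, by omega⟩

end SimpleGraph

theorem bfs_frontier_eq_dist_level_general {V : Type*}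
    (G : SimpleGraph V) (s : V) (F : ℕ → Set V)
    (hF0 : F 0 = {s})
    (hFsucc : ∀ k, F (k + 1) =
      {v | ∃ u ∈ F k, G.Adj u v} \ (⋃ i ≤ k, F i)) :
    ∀ k v, v ∈ F k ↔ G.Reachable s v ∧ G.dist s v = k := by
  suffices h : ∀ k, F k = G.distLevel s k by
    intro k v
    rw [h k, SimpleGraph.mem_distLevel]
  intro k
  induction k using Nat.strong_induction_on with
  | _ k ih =>
    cases k with
    | zero => rw [hF0, SimpleGraph.distLevel_zero]
    | succ k =>
      have hlower : ⋃ i ≤ k, F i = ⋃ i ≤ k, G.distLevel s i :=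
        Set.iUnion₂_congr fun i hi ↦ ih i (by omega)
      rw [hFsucc, SimpleGraph.distLevel_succ, ih k k.lt_succ_self, hlower]

/-- Correctness of the level-synchronous BFS frontier recurrence: the frontier
at level `k` is exactly the set of vertices at graph distance `k` from the
source `s`. -/
theorem bfs_frontier_eq_dist_level {V : Type*} [Fintype V]
    (G : SimpleGraph V) (s : V) (F : ℕ → Set V)
    (hF0 : F 0 = {s})
    (hFsucc : ∀ k, F (k + 1) =
      {v | ∃ u ∈ F k, G.Adj u v} \ (⋃ i ≤ k, F i)) :
    ∀ k v, v ∈ F k ↔ G.Reachable s v ∧ G.dist s v = k :=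
  bfs_frontier_eq_dist_level_general G s F hF0 hFsucc
end
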